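/- arXiv:1812.10226 — 2 statements merged into one kernel-verified Lean document; each statement's English description precedes it below -/
import Mathlib

section
/- Let q be a prime power, W = F_{q²} viewed as a 2-dimensional F_q-vector space, and Q : W → F_q the quadratic form Q(x) = x^{q+1}. Then the orthogonal group O(W,Q) = {f ∈ Aut_{F_q}(W) : Q(f(w)) = Q(w) for all w} is isomorphic to the dihedral group of order 2(q+1); concretely, it is generated by the multiplications by elements of μ_{q+1} = {ζ ∈ F_{q²} : ζ^{q+1} = 1} together with the Frobenius map x ↦ x^q, giving O(W,Q) ≅ μ_{q+1} ⋊ Z/2Z. -/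
section OrthAux

variable {K F : Type*} [Field K] [Field F] [Algebra K F]

/-- Multiplication by a unit as a `K`-linear automorphism. -/
private def mulLE (u : Fˣ) : F ≃ₗ[K] F where
  toFun w := (u : F) * w
  invFun w := ((u⁻¹ : Fˣ) : F) * w
  map_add' x y := mul_add _ x y
  map_smul' c x := mul_smul_comm c (u : F) x
  left_inv w := by simp [← mul_assoc]
  right_inv w := by simp [← mul_assoc]

@[simp] private lemma mulLE_apply (u : Fˣ) (w : F) : (mulLE (K := K) u) w = (u : F) * w := rfl

/-- The `q`-power Frobenius as a `K`-linear automorphism (hypotheses supplied). -/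
private def frobLE (q : ℕ)
    (hadd : ∀ x y : F, (x + y) ^ q = x ^ q + y ^ q)
    (hsmul : ∀ (c : K) (x : F), (c • x) ^ q = c • x ^ q)
    (hqq : ∀ w : F, (w ^ q) ^ q = w) : F ≃ₗ[K] F where
  toFun w := w ^ q
  invFun w := w ^ q
  map_add' := hadd
  map_smul' := hsmul
  left_inv := hqq
  right_inv := hqq

@[simp] private lemma frobLE_apply (q : ℕ) (hadd) (hsmul) (hqq) (w : F) :
    (frobLE (K := K) (F := F) q hadd hsmul hqq) w = w ^ q := rfl

/-- The underlying function of the dihedral homomorphism. -/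
private def dihFun {G : Type*} [Group G] {n : ℕ} (ρ : ZMod n → G) (σ : G) :
    DihedralGroup n → G
  | .r i => ρ i
  | .sr i => σ * ρ i

private lemma dihFun_mul {G : Type*} [Group G] {n : ℕ} (ρ : ZMod n → G) (σ : G)
    (hadd : ∀ i j, ρ (i + j) = ρ i * ρ j)
    (hcomm : ∀ i, ρ i * σ = σ * ρ (-i))
    (hσ : σ * σ = 1) :
    ∀ a b : DihedralGroup n, dihFun ρ σ (a * b) = dihFun ρ σ a * dihFun ρ σ b := by
  have haux : ∀ i j : ZMod n, ρ (j - i) = ρ (-i) * ρ j := by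
    intro i j
    rw [← hadd, neg_add_eq_sub]
  rintro (i | i) (j | j)
  · show ρ (i + j) = ρ i * ρ j
    exact hadd i j
  · show σ * ρ (j - i) = ρ i * (σ * ρ j)
    rw [haux, ← mul_assoc, ← hcomm, mul_assoc]
  · show σ * ρ (i + j) = σ * ρ i * ρ j
    rw [hadd, mul_assoc]
  · show ρ (j - i) = σ * ρ i * (σ * ρ j)
    rw [haux, mul_assoc, ← mul_assoc (ρ i), hcomm, ← mul_assoc, ← mul_assoc, hσ, one_mul]

end OrthAux

/-- for `W = F_{q²}` over `F_q` with quadratic form `Q(x) = x^{q+1}`,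
the orthogonal group `O(W,Q)` is the subgroup of `K`-linear automorphisms preserving `Q`;
it is generated by the multiplications by elements of `μ_{q+1}` together with the Frobenius
`x ↦ x^q`, and it is isomorphic to the dihedral group of order `2(q+1)`. -/
theorem orthogonal_group_is_dihedral (q : ℕ) (hq : IsPrimePow q)
    {K F : Type*} [Field K] [Field F] [Algebra K F] [Fintype K] [Fintype F]
    (hK : Fintype.card K = q) (hF : Fintype.card F = q ^ 2) :
    ∃ S : Subgroup (F ≃ₗ[K] F),
      (∀ f : F ≃ₗ[K] F, f ∈ S ↔ ∀ w : F, (f w) ^ (q + 1) = w ^ (q + 1)) ∧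
      S = Subgroup.closure {f : F ≃ₗ[K] F |
        (∃ ζ : F, ζ ^ (q + 1) = 1 ∧ ∀ w : F, f w = ζ * w) ∨ (∀ w : F, f w = w ^ q)} ∧
      Nonempty (S ≃* DihedralGroup (q + 1)) := by
  classical
  -- basic numerology
  have hq2 : 2 ≤ q := hq.two_le
  have hq1 : 1 ≤ q := le_trans (by norm_num) hq2
  -- characteristic setup
  obtain ⟨p, k, hpfact, hcharF, hqpk⟩ :
      ∃ p k : ℕ, Fact p.Prime ∧ CharP F p ∧ q = p ^ k := by
    obtain ⟨p', k', hp', hk', hq'⟩ := hq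
    have hcF : CharP F (ringChar F) := ringChar.charP F
    obtain ⟨n, hp, hcard⟩ := FiniteField.card F (ringChar F)
    have h1 : p' ^ (2 * k') = (ringChar F) ^ (n : ℕ) := by
      rw [mul_comm, pow_mul, hq', ← hF, hcard]
    have hpp' : ringChar F = p' := by
      have hdvd : ringChar F ∣ p' ^ (2 * k') := by
        rw [h1]
        exact dvd_pow_self _ (by positivity)
      have := hp.dvd_of_dvd_pow hdvd
      exact ((Nat.prime_dvd_prime_iff_eq hp (hp'.nat_prime)).mp this)
    refine ⟨ringChar F, k', ⟨hp⟩, hcF, ?_⟩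
    rw [hpp', hq']
  haveI := hpfact
  haveI := hcharF
  -- Frobenius facts
  have hadd : ∀ x y : F, (x + y) ^ q = x ^ q + y ^ q := by
    intro x y; rw [hqpk]; exact add_pow_char_pow x y p k
  have hcardpow : ∀ w : F, w ^ (q ^ 2) = w := by
    intro w; rw [← hF]; exact FiniteField.pow_card w
  have hqq : ∀ w : F, (w ^ q) ^ q = w := by
    intro w; rw [← pow_mul, ← sq]; exact hcardpow w
  have hsmul : ∀ (c : K) (x : F), (c • x) ^ q = c • x ^ q := by
    intro c x
    rw [Algebra.smul_def, Algebra.smul_def, mul_pow, ← map_pow, ← hK, FiniteField.pow_card]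
  set σ : F ≃ₗ[K] F := frobLE q hadd hsmul hqq with hσdef
  -- pointwise preservation lemmas
  have hmulQ : ∀ ζ : F, ζ ^ (q + 1) = 1 → ∀ w : F, (ζ * w) ^ (q + 1) = w ^ (q + 1) := by
    intro ζ hζ w; rw [mul_pow, hζ, one_mul]
  have hfrobQ : ∀ w : F, (w ^ q) ^ (q + 1) = w ^ (q + 1) := by
    intro w
    rw [pow_succ (w ^ q) q, hqq w, ← pow_succ']
  -- classification of norm-preserving linear automorphisms
  have classify : ∀ f : F ≃ₗ[K] F, (∀ w : F, (f w) ^ (q + 1) = w ^ (q + 1)) →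
      ∃ ζ : F, ζ ^ (q + 1) = 1 ∧
        ((∀ w : F, f w = ζ * w) ∨ (∀ w : F, f w = ζ * w ^ q)) := by
    intro f hf
    have hζ : (f 1) ^ (q + 1) = 1 := by simpa using hf 1
    have hζ0 : f 1 ≠ 0 := by
      intro h; rw [h, zero_pow (by omega)] at hζ; exact one_ne_zero hζ.symm
    set ζ : F := f 1 with hζdef
    set g : F → F := fun w => ζ⁻¹ * f w with hgdef
    have hfg : ∀ w, f w = ζ * g w := by
      intro w
      show f w = ζ * (ζ⁻¹ * f w)
      rw [← mul_assoc, mul_inv_cancel₀ hζ0, one_mul]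
    have hg1 : g 1 = 1 := by
      show ζ⁻¹ * f 1 = 1
      rw [← hζdef, inv_mul_cancel₀ hζ0]
    have hgQ : ∀ w, (g w) ^ (q + 1) = w ^ (q + 1) := by
      intro w
      show (ζ⁻¹ * f w) ^ (q + 1) = w ^ (q + 1)
      rw [mul_pow, inv_pow, hζ, inv_one, one_mul, hf]
    have hgadd : ∀ x y, g (x + y) = g x + g y := by
      intro x y
      show ζ⁻¹ * f (x + y) = ζ⁻¹ * f x + ζ⁻¹ * f y
      rw [map_add, mul_add]
    have hexp : ∀ x y : F, (x + y) ^ (q + 1)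
        = x ^ (q + 1) + (x * y ^ q + y * x ^ q) + y ^ (q + 1) := by
      intro x y
      rw [pow_succ (x + y) q, hadd, pow_succ x q, pow_succ y q]
      ring
    have htr : ∀ x, g x + (g x) ^ q = x + x ^ q := by
      intro x
      have h1 := hgQ (x + 1)
      rw [hgadd, hg1, hexp, hexp] at h1
      simp only [one_pow, mul_one, one_mul] at h1
      rw [hgQ x] at h1
      have h2 := add_right_cancel h1
      exact add_left_cancel h2
    have hquad : ∀ x, (g x - x) * (g x - x ^ q) = 0 := by
      intro x
      have h1 := htr x
      have h2 := hgQ x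
      rw [pow_succ (g x) q, pow_succ x q] at h2
      linear_combination (g x) * h1 - h2
    have hdich : ∀ x, g x = x ∨ g x = x ^ q := by
      intro x
      rcases mul_eq_zero.mp (hquad x) with h | h
      · exact Or.inl (sub_eq_zero.mp h)
      · exact Or.inr (sub_eq_zero.mp h)
    by_cases hid : ∀ x, g x = x
    · refine ⟨ζ, hζ, Or.inl fun w => ?_⟩
      rw [hfg w, hid w]
    · push_neg at hid
      obtain ⟨b, hb⟩ := hid
      have hgb : g b = b ^ q := (hdich b).resolve_left hb
      refine ⟨ζ, hζ, Or.inr fun w => ?_⟩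
      rw [hfg w]
      congr 1
      rcases hdich w with hx | hx
      · rcases hdich (w + b) with h | h
        · rw [hgadd, hx, hgb] at h
          have : b ^ q = b := by
            have := add_left_cancel h
            exact this
          exact absurd (hgb.trans this) hb
        · rw [hgadd, hx, hgb, hadd] at h
          have hwq : w = w ^ q := add_right_cancel h
          exact hx.trans hwq
      · exact hx
  -- the subgroup S
  let S : Subgroup (F ≃ₗ[K] F) :=
    { carrier := {f : F ≃ₗ[K] F | ∀ w : F, (f w) ^ (q + 1) = w ^ (q + 1)}
      one_mem' := fun _ => rfl
      mul_mem' := fun {f g} hf hg w => (hf (g w)).trans (hg w)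
      inv_mem' := fun {f} hf w => by
        have := hf (f⁻¹ w)
        rw [show f (f⁻¹ w) = w from f.apply_symm_apply w] at this
        exact this.symm }
  have hmemS : ∀ f : F ≃ₗ[K] F, f ∈ S ↔ ∀ w : F, (f w) ^ (q + 1) = w ^ (q + 1) :=
    fun _ => Iff.rfl
  have hσS : σ ∈ S := by
    rw [hmemS]; intro w; exact hfrobQ w
  refine ⟨S, hmemS, ?_, ?_⟩
  · -- S equals the closure of the generators
    apply le_antisymm
    · intro f hf
      obtain ⟨ζ, hζ1, hcase⟩ := classify f ((hmemS f).mp hf)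
      have hζ0 : ζ ≠ 0 := by
        intro h; rw [h, zero_pow (by omega)] at hζ1; exact one_ne_zero hζ1.symm
      rcases hcase with hc | hc
      · exact Subgroup.subset_closure (Or.inl ⟨ζ, hζ1, hc⟩)
      · have hm : mulLE (K := K) (Units.mk0 ζ hζ0) ∈ Subgroup.closure {f : F ≃ₗ[K] F |
            (∃ ζ : F, ζ ^ (q + 1) = 1 ∧ ∀ w : F, f w = ζ * w) ∨ (∀ w : F, f w = w ^ q)} :=
          Subgroup.subset_closure (Or.inl ⟨ζ, hζ1, fun w => rfl⟩)
        have hs : σ ∈ Subgroup.closure {f : F ≃ₗ[K] F |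
            (∃ ζ : F, ζ ^ (q + 1) = 1 ∧ ∀ w : F, f w = ζ * w) ∨ (∀ w : F, f w = w ^ q)} :=
          Subgroup.subset_closure (Or.inr fun w => rfl)
        have hfe : f = mulLE (K := K) (Units.mk0 ζ hζ0) * σ := by
          ext w
          show f w = (mulLE (K := K) (Units.mk0 ζ hζ0)) (σ w)
          rw [hc w]
          rfl
        rw [hfe]
        exact mul_mem hm hs
    · rw [Subgroup.closure_le]
      rintro f (⟨ζ, hζ1, hfw⟩ | hfw) <;> simp only [SetLike.mem_coe, hmemS] <;> intro w
      · rw [hfw w]; exact hmulQ ζ hζ1 w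
      · rw [hfw w]; exact hfrobQ w
  · -- construction of the dihedral isomorphism
    obtain ⟨g, hg⟩ := IsCyclic.exists_generator (α := Fˣ)
    have hog : orderOf g = q ^ 2 - 1 := by
      rw [orderOf_eq_card_of_forall_mem_zpowers hg, Nat.card_eq_fintype_card,
        Fintype.card_units, hF]
    have hfac : q ^ 2 - 1 = (q + 1) * (q - 1) := by
      simpa using Nat.sq_sub_sq q 1
    set ζ0 : Fˣ := g ^ (q - 1) with hζ0def
    have hoζ0 : orderOf ζ0 = q + 1 := by
      have hgcd : Nat.gcd (orderOf g) (q - 1) = q - 1 :=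
        Nat.gcd_eq_right (by rw [hog, hfac]; exact dvd_mul_left _ _)
      rw [hζ0def, orderOf_pow, hgcd, hog, hfac, Nat.mul_div_cancel _ (by omega)]
    set P : ZMod (q + 1) → Fˣ := fun i => ζ0 ^ i.val with hPdef
    have hPnat : ∀ m : ℕ, P (m : ZMod (q + 1)) = ζ0 ^ m := by
      intro m
      show ζ0 ^ (ZMod.val (m : ZMod (q + 1))) = ζ0 ^ m
      rw [ZMod.val_natCast, ← hoζ0, pow_mod_orderOf]
    have hPadd : ∀ i j, P (i + j) = P i * P j := by
      intro i j
      have h1 : ((i.val + j.val : ℕ) : ZMod (q + 1)) = i + j := by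
        push_cast
        rw [ZMod.natCast_val, ZMod.natCast_val, ZMod.cast_id, ZMod.cast_id]
      rw [← h1, hPnat, pow_add]
    have hP0 : P 0 = 1 := by
      show ζ0 ^ (ZMod.val (0 : ZMod (q + 1))) = 1
      rw [ZMod.val_zero, pow_zero]
    have hPneg : ∀ i, P (-i) = (P i)⁻¹ := by
      intro i
      apply eq_inv_of_mul_eq_one_left
      rw [← hPadd, neg_add_cancel, hP0]
    have hPpow : ∀ i, (P i) ^ (q + 1) = 1 := by
      intro i
      show (ζ0 ^ i.val) ^ (q + 1) = 1
      have h1 : ζ0 ^ (q + 1) = 1 := by rw [← hoζ0]; exact pow_orderOf_eq_one ζ0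
      rw [← pow_mul, mul_comm i.val (q + 1), pow_mul, h1, one_pow]
    have hPq : ∀ i, (P i) ^ q = P (-i) := by
      intro i
      rw [hPneg]
      apply eq_inv_of_mul_eq_one_left
      rw [← pow_succ, hPpow]
    set ρ : ZMod (q + 1) → (F ≃ₗ[K] F) := fun i => mulLE (P i) with hρdef
    have hρadd : ∀ i j, ρ (i + j) = ρ i * ρ j := by
      intro i j
      ext w
      show ((P (i + j) : Fˣ) : F) * w = (P i : F) * ((P j : F) * w)
      rw [hPadd, Units.val_mul, mul_assoc]
    have hρcomm : ∀ i, ρ i * σ = σ * ρ (-i) := by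
      intro i
      ext w
      show (P i : F) * (w ^ q) = ((P (-i) : F) * w) ^ q
      rw [mul_pow, ← Units.val_pow_eq_pow_val, hPq, neg_neg]
    have hσσ : σ * σ = 1 := by
      ext w
      show (w ^ q) ^ q = w
      exact hqq w
    set Ψ : DihedralGroup (q + 1) →* (F ≃ₗ[K] F) :=
      MonoidHom.mk' (dihFun ρ σ) (dihFun_mul ρ σ hρadd hρcomm hσσ) with hΨdef
    have hΨr : ∀ i, Ψ (.r i) = ρ i := fun _ => rfl
    have hΨsr : ∀ i, Ψ (.sr i) = σ * ρ i := fun _ => rfl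
    have hρS : ∀ i, ρ i ∈ S := by
      intro i
      rw [hmemS]
      intro w
      show ((P i : F) * w) ^ (q + 1) = w ^ (q + 1)
      apply hmulQ
      rw [← Units.val_pow_eq_pow_val, hPpow, Units.val_one]
    have hΨS : ∀ d, Ψ d ∈ S := by
      rintro (i | i)
      · exact hρS i
      · exact S.mul_mem hσS (hρS i)
    -- injectivity
    have hΨinj : Function.Injective Ψ := by
      rw [injective_iff_map_eq_one]
      rintro (i | i) h
      · have h2 : ρ i = 1 := by rw [← hΨr]; exact h
        have h3 : (P i : F) * 1 = 1 := congrArg (fun e : F ≃ₗ[K] F => e 1) h2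
        have hP1 : P i = 1 := Units.ext (by simpa using h3)
        have hdvd : (q + 1) ∣ i.val := by
          have := orderOf_dvd_of_pow_eq_one hP1
          rwa [hoζ0] at this
        have hval : i.val = 0 := Nat.eq_zero_of_dvd_of_lt hdvd (ZMod.val_lt i)
        have hi : i = 0 := (ZMod.val_eq_zero i).mp hval
        subst hi
        rfl
      · exfalso
        have h2 : σ * ρ i = 1 := by rw [← hΨsr]; exact h
        have hall : ∀ w : F, ((P i : F) * w) ^ q = w := fun w =>
          congrArg (fun e : F ≃ₗ[K] F => e w) h2
        have h1 : (P i : F) ^ q = 1 := by simpa using hall 1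
        have hww : ∀ w : F, w ^ q = w := by
          intro w
          have := hall w
          rwa [mul_pow, h1, one_mul] at this
        have hgq : g ^ q = g ^ 1 := by
          apply Units.ext
          push_cast
          simpa using hww (g : F)
        have hmod := pow_eq_pow_iff_modEq.mp hgq
        rw [hog] at hmod
        have hdvd : (q ^ 2 - 1) ∣ (q - 1) := (Nat.modEq_iff_dvd' hq1).mp hmod.symm
        have hle : q ^ 2 - 1 ≤ q - 1 := Nat.le_of_dvd (by omega) hdvd
        have hq2' : q ^ 2 = q * q := sq q
        have : 2 * q ≤ q * q := Nat.mul_le_mul_right q hq2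
        omega
    -- surjectivity
    have hΨsurj : ∀ f ∈ S, ∃ d, Ψ d = f := by
      intro f hf
      obtain ⟨ζ, hζ1, hca⟩ := classify f ((hmemS f).mp hf)
      have hζ0 : ζ ≠ 0 := by
        intro hz; rw [hz, zero_pow (by omega)] at hζ1; exact one_ne_zero hζ1.symm
      have hgen : ∃ m : ℕ, (ζ0 ^ m : Fˣ) = Units.mk0 ζ hζ0 := by
        obtain ⟨m, hm'⟩ := (mem_powers_iff_mem_zpowers).mpr (hg (Units.mk0 ζ hζ0))
        have hm : g ^ m = Units.mk0 ζ hζ0 := hm'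
        have hu1 : (Units.mk0 ζ hζ0) ^ (q + 1) = 1 := by
          apply Units.ext; push_cast; exact hζ1
        have hpow1 : g ^ (m * (q + 1)) = 1 := by rw [pow_mul, hm, hu1]
        have hdvd := orderOf_dvd_of_pow_eq_one hpow1
        rw [hog, hfac] at hdvd
        have hdvd2 : (q + 1) * (q - 1) ∣ (q + 1) * m := by rwa [mul_comm m (q + 1)] at hdvd
        obtain ⟨c, hc⟩ := (Nat.mul_dvd_mul_iff_left (show 0 < q + 1 by omega)).mp hdvd2
        exact ⟨c, by rw [hζ0def, ← pow_mul, ← hc, hm]⟩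
      obtain ⟨m, hm⟩ := hgen
      have hζeq : ((ζ0 ^ m : Fˣ) : F) = ζ := by rw [hm]; rfl
      rcases hca with hc | hc
      · refine ⟨.r (m : ZMod (q + 1)), ?_⟩
        ext w
        show ((P (m : ZMod (q + 1)) : Fˣ) : F) * w = f w
        rw [hPnat, hζeq, hc w]
      · refine ⟨.sr (-(m : ZMod (q + 1))), ?_⟩
        ext w
        show (((P (-(m : ZMod (q + 1))) : Fˣ) : F) * w) ^ q = f w
        rw [mul_pow, ← Units.val_pow_eq_pow_val, hPq, neg_neg, hPnat, hζeq, hc w]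
    -- assemble the isomorphism
    let Ψ' : DihedralGroup (q + 1) →* S := Ψ.codRestrict S hΨS
    have hinj' : Function.Injective Ψ' := fun a b hab =>
      hΨinj (congrArg Subtype.val hab)
    have hsurj' : Function.Surjective Ψ' := by
      rintro ⟨f, hf⟩
      obtain ⟨d, hd⟩ := hΨsurj f hf
      exact ⟨d, Subtype.ext hd⟩
    exact ⟨(MulEquiv.ofBijective Ψ' ⟨hinj', hsurj'⟩).symm⟩
end

section
/- Let q be a prime power, n ≥ 1, and consider the map π : F_{q²}^n → F_q, (x_i) ↦ Σ_{i=1}^n x_i^{q+1} (noting each x_i^{q+1} ∈ F_q). Then |π^{-1}(0)| = q^{2n−1} + (−1)^n(q^{n} − q^{n-1}), and for every c ∈ F_q^×, |π^{-1}(c)| = q^{2n−1} − (−1)^n q^{n−1}. -/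
open Finset Polynomial

set_option linter.unusedSectionVars false

section HermAux

variable {F : Type*} [Field F] [Fintype F] [DecidableEq F] {q : ℕ}

private lemma frob_hom (hq : IsPrimePow q) (hF : Fintype.card F = q ^ 2) :
    ∃ φ : F →+* F, ∀ x : F, φ x = x ^ q := by
  obtain ⟨p, k, hp, hk, rfl⟩ := hq
  have hp' : p.Prime := hp.nat_prime
  haveI := ringChar.charP F
  obtain ⟨m, hrp, hcard⟩ := FiniteField.card F (ringChar F)
  have hpr : p = ringChar F := by
    have hdvd : p ∣ ringChar F ^ (m : ℕ) := by
      rw [← hcard, hF]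
      exact dvd_pow (dvd_pow_self p hk.ne') two_ne_zero
    exact (Nat.prime_dvd_prime_iff_eq hp' hrp).1 (hp'.dvd_of_dvd_pow hdvd)
  haveI : CharP F p := hpr ▸ ringChar.charP F
  haveI : Fact p.Prime := ⟨hp'⟩
  exact ⟨iterateFrobenius F p k, fun x => iterateFrobenius_def ..⟩

private lemma pow_q2 (hF : Fintype.card F = q ^ 2) (x : F) : x ^ q ^ 2 = x := by
  rw [← hF]; exact FiniteField.pow_card x

private lemma norm_fixed (hF : Fintype.card F = q ^ 2) (x : F) :
    (x ^ (q + 1)) ^ q = x ^ (q + 1) := by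
  have h : (q + 1) * q = q ^ 2 + q := by ring
  rw [← pow_mul, h, pow_add, pow_q2 hF, ← pow_succ']

private lemma m_zero : (univ.filter (fun a : F => a ^ (q + 1) = 0)).card = 1 := by
  have h : univ.filter (fun a : F => a ^ (q + 1) = 0) = {0} := by
    ext a
    simp [pow_eq_zero_iff (Nat.succ_ne_zero q)]
  rw [h, card_singleton]


private lemma m_le (c : F) : (univ.filter (fun a : F => a ^ (q + 1) = c)).card ≤ q + 1 := by
  have hsub : univ.filter (fun a : F => a ^ (q + 1) = c) ⊆ (nthRoots (q + 1) c).toFinset := by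
    intro a ha
    rw [Multiset.mem_toFinset, mem_nthRoots (Nat.succ_pos q)]
    exact (mem_filter.mp ha).2
  calc (univ.filter (fun a : F => a ^ (q + 1) = c)).card
      ≤ (nthRoots (q + 1) c).toFinset.card := card_le_card hsub
    _ ≤ Multiset.card (nthRoots (q + 1) c) := (nthRoots (q + 1) c).toFinset_card_le
    _ ≤ q + 1 := card_nthRoots _ _

private lemma m_eq_zero (hF : Fintype.card F = q ^ 2) {c : F} (h1 : c ^ q ≠ c) :
    (univ.filter (fun a : F => a ^ (q + 1) = c)).card = 0 := by
  rw [Finset.card_eq_zero, Finset.filter_eq_empty_iff]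
  intro a _ hac
  exact h1 (hac ▸ norm_fixed hF a)

private lemma sum_m (hF : Fintype.card F = q ^ 2) :
    ∑ c : F, (univ.filter (fun a : F => a ^ (q + 1) = c)).card = q ^ 2 := by
  have h := Finset.card_eq_sum_card_fiberwise
    (s := (univ : Finset F)) (t := univ) (f := fun a : F => a ^ (q + 1))
    (fun a _ => mem_univ _)
  rw [card_univ, hF] at h
  exact h.symm

private lemma Kx_le (hq2 : 2 ≤ q) :
    (univ.filter (fun c : F => c ≠ 0 ∧ c ^ q = c)).card ≤ q - 1 := by
  have h1 : 0 < q - 1 := by omega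
  have hsub : univ.filter (fun c : F => c ≠ 0 ∧ c ^ q = c)
      ⊆ (nthRoots (q - 1) (1 : F)).toFinset := by
    intro c hc
    obtain ⟨-, h0, hfix⟩ : c ∈ univ ∧ c ≠ 0 ∧ c ^ q = c := by
      simpa [mem_filter] using hc
    rw [Multiset.mem_toFinset, mem_nthRoots h1]
    have h2 : c ^ (q - 1) * c = 1 * c := by
      rw [one_mul, ← pow_succ]
      have h3 : q - 1 + 1 = q := by omega
      rw [h3, hfix]
    exact mul_right_cancel₀ h0 h2
  calc (univ.filter (fun c : F => c ≠ 0 ∧ c ^ q = c)).card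
      ≤ (nthRoots (q - 1) (1 : F)).toFinset.card := card_le_card hsub
    _ ≤ Multiset.card (nthRoots (q - 1) (1 : F)) := Multiset.toFinset_card_le _
    _ ≤ q - 1 := card_nthRoots _ _

private lemma key (hF : Fintype.card F = q ^ 2) (hq2 : 2 ≤ q) :
    (univ.filter (fun c : F => c ≠ 0 ∧ c ^ q = c)).card = q - 1 ∧
    ∀ c : F, c ≠ 0 → c ^ q = c →
      (univ.filter (fun a : F => a ^ (q + 1) = c)).card = q + 1 := by
  set Kx := univ.filter (fun c : F => c ≠ 0 ∧ c ^ q = c) with hKx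
  have hsplit : (q : ℕ) ^ 2 =
      1 + ∑ c ∈ Kx, (univ.filter (fun a : F => a ^ (q + 1) = c)).card := by
    rw [← sum_m hF, ← Finset.add_sum_erase _ _ (mem_univ (0 : F)), m_zero]
    congr 1
    refine (Finset.sum_subset ?_ ?_).symm
    · intro c hc
      rcases mem_filter.mp hc with ⟨-, h0, -⟩
      exact mem_erase.mpr ⟨h0, mem_univ _⟩
    · intro c hc hnc
      rcases mem_erase.mp hc with ⟨h0, -⟩
      refine m_eq_zero hF fun hfix => hnc ?_
      exact mem_filter.mpr ⟨mem_univ _, h0, hfix⟩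
  have hle : ∑ c ∈ Kx, (univ.filter (fun a : F => a ^ (q + 1) = c)).card
      ≤ Kx.card * (q + 1) := by
    calc ∑ c ∈ Kx, (univ.filter (fun a : F => a ^ (q + 1) = c)).card
        ≤ ∑ _c ∈ Kx, (q + 1) := Finset.sum_le_sum fun c _ => m_le c
      _ = Kx.card * (q + 1) := by rw [Finset.sum_const, smul_eq_mul]
  have e : (q - 1) * (q + 1) + 1 = q ^ 2 := by
    obtain ⟨r, rfl⟩ := Nat.exists_eq_add_of_le hq2
    have h4 : 2 + r - 1 = r + 1 := by omega
    rw [h4]; ring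
  have hKle : Kx.card ≤ q - 1 := Kx_le hq2
  have hge : (q - 1) * (q + 1) ≤ Kx.card * (q + 1) := by linarith
  have hcard : Kx.card = q - 1 :=
    le_antisymm hKle (Nat.le_of_mul_le_mul_right hge (by omega))
  refine ⟨hcard, ?_⟩
  have hsum_eq : ∑ c ∈ Kx, (univ.filter (fun a : F => a ^ (q + 1) = c)).card
      = ∑ _c ∈ Kx, (q + 1) := by
    rw [Finset.sum_const, smul_eq_mul, hcard]
    linarith
  intro c h0 hfix
  have := (Finset.sum_eq_sum_iff_of_le (fun c _ => m_le c)).mp hsum_eq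
  exact this c (mem_filter.mpr ⟨mem_univ _, h0, hfix⟩)

private lemma hsurj (hF : Fintype.card F = q ^ 2) (hq2 : 2 ≤ q)
    {c : F} (h0 : c ≠ 0) (hfix : c ^ q = c) : ∃ a : F, a ^ (q + 1) = c := by
  have h := (key hF hq2).2 c h0 hfix
  have hpos : 0 < (univ.filter (fun a : F => a ^ (q + 1) = c)).card := by omega
  obtain ⟨a, ha⟩ := Finset.card_pos.mp hpos
  exact ⟨a, (mem_filter.mp ha).2⟩

private lemma N_congr (hF : Fintype.card F = q ^ 2) (hq2 : 2 ≤ q) (n : ℕ)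
    {c c' : F} (h0 : c ≠ 0) (hfix : c ^ q = c) (h0' : c' ≠ 0) (hfix' : c' ^ q = c') :
    Fintype.card {x : Fin n → F // ∑ i, x i ^ (q + 1) = c} =
      Fintype.card {x : Fin n → F // ∑ i, x i ^ (q + 1) = c'} := by
  have hr0 : c' * c⁻¹ ≠ 0 := mul_ne_zero h0' (inv_ne_zero h0)
  have hrfix : (c' * c⁻¹) ^ q = c' * c⁻¹ := by
    rw [mul_pow, inv_pow, hfix, hfix']
  obtain ⟨l, hl⟩ := hsurj hF hq2 hr0 hrfix
  have hl0 : l ≠ 0 := by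
    intro h
    rw [h, zero_pow (Nat.succ_ne_zero q)] at hl
    exact hr0 hl.symm
  refine Fintype.card_congr ⟨fun x => ⟨fun i => l * x.1 i, ?_⟩,
    fun y => ⟨fun i => l⁻¹ * y.1 i, ?_⟩, fun x => ?_, fun y => ?_⟩
  · simp only [mul_pow, ← Finset.mul_sum, x.2, hl]
    exact inv_mul_cancel_right₀ h0 c'
  · simp only [mul_pow, ← Finset.mul_sum, y.2, inv_pow, hl]
    rw [mul_inv, inv_inv, mul_comm c'⁻¹ c, mul_assoc]
    rw [inv_mul_cancel₀ h0', mul_one]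
  · apply Subtype.ext
    funext i
    simp [inv_mul_cancel_left₀ hl0]
  · apply Subtype.ext
    funext i
    simp [mul_inv_cancel_left₀ hl0]

private lemma pi_fix (hF : Fintype.card F = q ^ 2) (φ : F →+* F) (hφ : ∀ x : F, φ x = x ^ q)
    (n : ℕ) (x : Fin n → F) :
    (∑ i, x i ^ (q + 1)) ^ q = ∑ i, x i ^ (q + 1) := by
  rw [← hφ, map_sum]
  exact Finset.sum_congr rfl fun i _ => by rw [hφ]; exact norm_fixed hF (x i)

private lemma N_total (hF : Fintype.card F = q ^ 2) (hq2 : 2 ≤ q)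
    (φ : F →+* F) (hφ : ∀ x : F, φ x = x ^ q) (n : ℕ) :
    Fintype.card {x : Fin n → F // ∑ i, x i ^ (q + 1) = 0} +
      (q - 1) * Fintype.card {x : Fin n → F // ∑ i, x i ^ (q + 1) = 1} = q ^ (2 * n) := by
  have hpart := Finset.card_eq_sum_card_fiberwise
    (s := (univ : Finset (Fin n → F))) (t := (univ : Finset F))
    (f := fun x => ∑ i, x i ^ (q + 1)) (fun x _ => mem_univ _)
  rw [card_univ] at hpart
  have hcard : Fintype.card (Fin n → F) = q ^ (2 * n) := by
    rw [Fintype.card_fun, hF, Fintype.card_fin, ← pow_mul]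
  rw [hcard, ← Finset.add_sum_erase _ _ (mem_univ (0 : F))] at hpart
  have hfib : ∀ c : F, (univ.filter (fun x : Fin n → F => ∑ i, x i ^ (q + 1) = c)).card
      = Fintype.card {x : Fin n → F // ∑ i, x i ^ (q + 1) = c} :=
    fun c => (Fintype.card_subtype _).symm
  have hsub : univ.filter (fun c : F => c ≠ 0 ∧ c ^ q = c) ⊆ (univ : Finset F).erase 0 := by
    intro c hc
    rcases mem_filter.mp hc with ⟨-, h0, -⟩
    exact mem_erase.mpr ⟨h0, mem_univ _⟩
  have hvan : ∀ c ∈ (univ : Finset F).erase 0,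
      c ∉ univ.filter (fun c : F => c ≠ 0 ∧ c ^ q = c) →
      (univ.filter (fun x : Fin n → F => ∑ i, x i ^ (q + 1) = c)).card = 0 := by
    intro c hc hnc
    rcases mem_erase.mp hc with ⟨h0, -⟩
    rw [Finset.card_eq_zero, Finset.filter_eq_empty_iff]
    intro x _ hx
    exact hnc (mem_filter.mpr ⟨mem_univ _, h0, hx ▸ pi_fix hF φ hφ n x⟩)
  have hrest : ∑ c ∈ (univ : Finset F).erase 0,
      (univ.filter (fun x : Fin n → F => ∑ i, x i ^ (q + 1) = c)).card
      = (q - 1) * Fintype.card {x : Fin n → F // ∑ i, x i ^ (q + 1) = 1} := by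
    rw [← Finset.sum_subset hsub hvan]
    calc ∑ c ∈ univ.filter (fun c : F => c ≠ 0 ∧ c ^ q = c),
        (univ.filter (fun x : Fin n → F => ∑ i, x i ^ (q + 1) = c)).card
        = ∑ _c ∈ univ.filter (fun c : F => c ≠ 0 ∧ c ^ q = c),
            Fintype.card {x : Fin n → F // ∑ i, x i ^ (q + 1) = 1} := by
          refine Finset.sum_congr rfl fun c hc => ?_
          rcases mem_filter.mp hc with ⟨-, h0, hfix⟩
          rw [hfib c]
          exact N_congr hF hq2 n h0 hfix one_ne_zero (one_pow q)
      _ = _ := by rw [Finset.sum_const, smul_eq_mul, (key hF hq2).1]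
  rw [hrest, hfib 0] at hpart
  exact hpart.symm

private lemma N_succ (hF : Fintype.card F = q ^ 2) (hq2 : 2 ≤ q)
    (φ : F →+* F) (hφ : ∀ x : F, φ x = x ^ q) (n : ℕ) :
    Fintype.card {x : Fin (n + 1) → F // ∑ i, x i ^ (q + 1) = 0}
      = Fintype.card {x : Fin n → F // ∑ i, x i ^ (q + 1) = 0}
        + (q + 1) * ((q - 1) * Fintype.card {x : Fin n → F // ∑ i, x i ^ (q + 1) = 1}) := by
  have hstep : Fintype.card {x : Fin (n + 1) → F // ∑ i, x i ^ (q + 1) = 0}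
      = ∑ a : F, Fintype.card {y : Fin n → F // ∑ i, y i ^ (q + 1) = -(a ^ (q + 1))} := by
    calc Fintype.card {x : Fin (n + 1) → F // ∑ i, x i ^ (q + 1) = 0}
        = Fintype.card {p : F × (Fin n → F) //
            p.1 ^ (q + 1) + ∑ i, p.2 i ^ (q + 1) = 0} :=
          Fintype.card_congr (Equiv.subtypeEquiv
            (Fin.consEquiv (fun _ : Fin (n + 1) => F)).symm
            (fun x => by rw [Fin.sum_univ_succ]; exact Iff.rfl))
      _ = Fintype.card (Σ a : F, {y : Fin n → F //
            a ^ (q + 1) + ∑ i, y i ^ (q + 1) = 0}) :=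
          Fintype.card_congr (Equiv.subtypeProdEquivSigmaSubtype
            (fun (a : F) (y : Fin n → F) => a ^ (q + 1) + ∑ i, y i ^ (q + 1) = 0))
      _ = ∑ a : F, Fintype.card {y : Fin n → F //
            a ^ (q + 1) + ∑ i, y i ^ (q + 1) = 0} := Fintype.card_sigma
      _ = ∑ a : F, Fintype.card {y : Fin n → F //
            ∑ i, y i ^ (q + 1) = -(a ^ (q + 1))} := by
          refine Finset.sum_congr rfl fun a _ => Fintype.card_congr
            (Equiv.subtypeEquivRight fun y => ?_)
          constructor
          · intro h; exact eq_neg_of_add_eq_zero_right h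
          · intro h; rw [h]; ring
  have hregroup : ∑ a : F, Fintype.card {y : Fin n → F //
        ∑ i, y i ^ (q + 1) = -(a ^ (q + 1))}
      = ∑ t : F, (univ.filter (fun a : F => a ^ (q + 1) = t)).card *
          Fintype.card {y : Fin n → F // ∑ i, y i ^ (q + 1) = -t} := by
    have h := Finset.sum_fiberwise_of_maps_to' (s := (univ : Finset F))
      (t := (univ : Finset F)) (g := fun a : F => a ^ (q + 1))
      (fun a _ => mem_univ _)
      (fun t => Fintype.card {y : Fin n → F // ∑ i, y i ^ (q + 1) = -t})
    rw [← h]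
    exact Finset.sum_congr rfl fun t _ => by rw [Finset.sum_const, smul_eq_mul]
  rw [hstep, hregroup, ← Finset.add_sum_erase _ _ (mem_univ (0 : F)), m_zero, one_mul]
  congr 1
  · exact Fintype.card_congr (Equiv.subtypeEquivRight fun y => by rw [neg_zero])
  · have hsub : univ.filter (fun c : F => c ≠ 0 ∧ c ^ q = c) ⊆ (univ : Finset F).erase 0 := by
      intro c hc
      rcases mem_filter.mp hc with ⟨-, h0, -⟩
      exact mem_erase.mpr ⟨h0, mem_univ _⟩
    have hvan : ∀ t ∈ (univ : Finset F).erase 0,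
        t ∉ univ.filter (fun c : F => c ≠ 0 ∧ c ^ q = c) →
        (univ.filter (fun a : F => a ^ (q + 1) = t)).card *
          Fintype.card {y : Fin n → F // ∑ i, y i ^ (q + 1) = -t} = 0 := by
      intro t ht hnt
      rcases mem_erase.mp ht with ⟨h0, -⟩
      have : t ^ q ≠ t := fun hfix => hnt (mem_filter.mpr ⟨mem_univ _, h0, hfix⟩)
      rw [m_eq_zero hF this, zero_mul]
    rw [← Finset.sum_subset hsub hvan]
    calc ∑ t ∈ univ.filter (fun c : F => c ≠ 0 ∧ c ^ q = c),
        (univ.filter (fun a : F => a ^ (q + 1) = t)).card *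
          Fintype.card {y : Fin n → F // ∑ i, y i ^ (q + 1) = -t}
        = ∑ _t ∈ univ.filter (fun c : F => c ≠ 0 ∧ c ^ q = c),
            (q + 1) * Fintype.card {x : Fin n → F // ∑ i, x i ^ (q + 1) = 1} := by
          refine Finset.sum_congr rfl fun t ht => ?_
          rcases mem_filter.mp ht with ⟨-, h0, hfix⟩
          rw [(key hF hq2).2 t h0 hfix]
          congr 1
          have hneg0 : -t ≠ 0 := neg_ne_zero.mpr h0
          have hnegfix : (-t) ^ q = -t := by rw [← hφ, map_neg, hφ, hfix]
          exact N_congr hF hq2 n hneg0 hnegfix one_ne_zero (one_pow q)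
      _ = (q - 1) * ((q + 1) *
            Fintype.card {x : Fin n → F // ∑ i, x i ^ (q + 1) = 1}) := by
          rw [Finset.sum_const, smul_eq_mul, (key hF hq2).1]
      _ = _ := by ring

private lemma N_one (c : F) :
    Fintype.card {x : Fin 1 → F // ∑ i, x i ^ (q + 1) = c}
      = (univ.filter (fun a : F => a ^ (q + 1) = c)).card := by
  rw [← Fintype.card_subtype]
  exact Fintype.card_congr (Equiv.subtypeEquiv (Equiv.funUnique (Fin 1) F)
    (fun x => by rw [Fin.sum_univ_one]; exact Iff.rfl))

private lemma A_formula (hF : Fintype.card F = q ^ 2) (hq2 : 2 ≤ q)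
    (φ : F →+* F) (hφ : ∀ x : F, φ x = x ^ q) (m : ℕ) :
    (Fintype.card {x : Fin (m + 1) → F // ∑ i, x i ^ (q + 1) = 0} : ℤ)
      = (q : ℤ) ^ (2 * m + 1) + (-1) ^ (m + 1) * ((q : ℤ) ^ (m + 1) - (q : ℤ) ^ m) := by
  induction m with
  | zero =>
    rw [N_one, m_zero]
    push_cast
    ring
  | succ m ih =>
    have hle1 : 1 ≤ q := le_trans one_le_two hq2
    have hcast : ((q - 1 : ℕ) : ℤ) = (q : ℤ) - 1 := by
      rw [Nat.cast_sub hle1]; norm_num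
    have h1' : (Fintype.card {x : Fin (m + 1 + 1) → F // ∑ i, x i ^ (q + 1) = 0} : ℤ)
        = (Fintype.card {x : Fin (m + 1) → F // ∑ i, x i ^ (q + 1) = 0} : ℤ)
          + ((q : ℤ) + 1) * (((q : ℤ) - 1) *
            (Fintype.card {x : Fin (m + 1) → F // ∑ i, x i ^ (q + 1) = 1} : ℤ)) := by
      have h := congrArg (fun t : ℕ => (t : ℤ)) (N_succ hF hq2 φ hφ (m + 1))
      push_cast [hcast] at h
      linear_combination h
    have h2' : (Fintype.card {x : Fin (m + 1) → F // ∑ i, x i ^ (q + 1) = 0} : ℤ)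
        + ((q : ℤ) - 1) *
          (Fintype.card {x : Fin (m + 1) → F // ∑ i, x i ^ (q + 1) = 1} : ℤ)
        = (q : ℤ) ^ (2 * (m + 1)) := by
      have h := congrArg (fun t : ℕ => (t : ℤ)) (N_total hF hq2 φ hφ (m + 1))
      push_cast [hcast] at h
      linear_combination h
    linear_combination h1' + ((q : ℤ) + 1) * h2' - (q : ℤ) * ih

private lemma B_formula (hF : Fintype.card F = q ^ 2) (hq2 : 2 ≤ q)
    (φ : F →+* F) (hφ : ∀ x : F, φ x = x ^ q) (m : ℕ)
    {c : F} (h0 : c ≠ 0) (hfix : c ^ q = c) :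
    (Fintype.card {x : Fin (m + 1) → F // ∑ i, x i ^ (q + 1) = c} : ℤ)
      = (q : ℤ) ^ (2 * m + 1) - (-1) ^ (m + 1) * (q : ℤ) ^ m := by
  rw [N_congr hF hq2 (m + 1) h0 hfix one_ne_zero (one_pow q)]
  have hle1 : 1 ≤ q := le_trans one_le_two hq2
  have hcast : ((q - 1 : ℕ) : ℤ) = (q : ℤ) - 1 := by
    rw [Nat.cast_sub hle1]; norm_num
  have h2' : (Fintype.card {x : Fin (m + 1) → F // ∑ i, x i ^ (q + 1) = 0} : ℤ)
      + ((q : ℤ) - 1) *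
        (Fintype.card {x : Fin (m + 1) → F // ∑ i, x i ^ (q + 1) = 1} : ℤ)
      = (q : ℤ) ^ (2 * (m + 1)) := by
    have h := congrArg (fun t : ℕ => (t : ℤ)) (N_total hF hq2 φ hφ (m + 1))
    push_cast [hcast] at h
    linear_combination h
  have hq1 : ((q : ℤ) - 1) ≠ 0 :=
    sub_ne_zero.mpr (by exact_mod_cast (Nat.lt_of_lt_of_le one_lt_two hq2).ne')
  apply mul_left_cancel₀ hq1
  linear_combination h2' - A_formula hF hq2 φ hφ m

end HermAux


/-- for `π : F_{q²}^n → F_q`, `x ↦ Σ x_i^{q+1}` (each `x_i^{q+1}` lies in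
`F_q`, i.e. is fixed by `c ↦ c^q`), the fiber over `0` has `q^{2n−1} + (−1)^n(q^n − q^{n−1})`
elements and the fiber over any `c ∈ F_q^×` has `q^{2n−1} − (−1)^n q^{n−1}` elements. -/
theorem hermitian_fiber_counts (q n : ℕ) (hq : IsPrimePow q) (hn : 1 ≤ n)
    {F : Type*} [Field F] [Fintype F] (hF : Fintype.card F = q ^ 2) :
    -- the values of π lie in F_q
    (∀ x : Fin n → F, (∑ i, (x i) ^ (q + 1)) ^ q = ∑ i, (x i) ^ (q + 1)) ∧
    -- the fiber over 0
    (Nat.card {x : Fin n → F // ∑ i, (x i) ^ (q + 1) = 0} : ℤ) =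
      (q : ℤ) ^ (2 * n - 1) + (-1) ^ n * ((q : ℤ) ^ n - (q : ℤ) ^ (n - 1)) ∧
    -- the fibers over nonzero c ∈ F_q
    (∀ c : F, c ≠ 0 → c ^ q = c →
      (Nat.card {x : Fin n → F // ∑ i, (x i) ^ (q + 1) = c} : ℤ) =
        (q : ℤ) ^ (2 * n - 1) - (-1) ^ n * (q : ℤ) ^ (n - 1)) := by
  classical
  obtain ⟨m, rfl⟩ : ∃ m, n = m + 1 := ⟨n - 1, by omega⟩
  obtain ⟨φ, hφ⟩ := frob_hom hq hF
  have hq2 : 2 ≤ q := hq.two_le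
  have he1 : 2 * (m + 1) - 1 = 2 * m + 1 := by omega
  have he2 : m + 1 - 1 = m := rfl
  refine ⟨pi_fix hF φ hφ _, ?_, ?_⟩
  · rw [Nat.card_eq_fintype_card, A_formula hF hq2 φ hφ m, he1, he2]
  · intro c h0 hfix
    rw [Nat.card_eq_fintype_card, B_formula hF hq2 φ hφ m h0 hfix, he1, he2]
end
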